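/- arXiv:1608.08592 — 3 statements merged into one kernel-verified Lean document; each statement's English description precedes it below -/
import Mathlib

section
/- Let q ≥ 1 and let S be a finite set of words over the alphabet Σ = {x_1, …, x_q}. If the iterated shuffle S^† is co-finite, then for each i ∈ {1, …, q} the collection 𝒯_i is non-empty. -/
/-!
A word of `S^†` is a shuffle of words of `S`, each of which is a subword of it. If `xᵢ ∉ S`,
cofiniteness gives `xᵢⁿ, xᵢⁿ⁺¹ ∈ S^†` for some `n`; they are shuffles of powers `xᵢᵏ ∈ S`, and
the gcd of the exponents used divides both `n` and `n + 1`, so it is `1`. Likewise some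
`xᵢ xⱼⁿ ∈ S^†`, and the word of `S` supplying its letter `xᵢ` must be `xᵢ xⱼᵏ` with `k ≥ 1`;
symmetrically for `xⱼⁿ xᵢ`.
-/

/-- `Shuffle u v w` means that the word `w` is an interleaving (shuffle) of the
words `u` and `v`. -/
inductive Shuffle {α : Type*} : List α → List α → List α → Prop
  | nil : Shuffle [] [] []
  | left {a : α} {u v w : List α} : Shuffle u v w → Shuffle (a :: u) v (a :: w)
  | right {a : α} {u v w : List α} : Shuffle u v w → Shuffle u (a :: v) (a :: w)

/-- `IterShuffle S y` means `y` belongs to the iterated shuffle `S^†`, i.e. `y`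
can be obtained by shuffling together finitely many (possibly zero) words of `S`. -/
inductive IterShuffle {α : Type*} (S : Set (List α)) : List α → Prop
  | nil : IterShuffle S []
  | step {u w y : List α} : u ∈ S → IterShuffle S w → Shuffle u w y → IterShuffle S y

/-- `TiNonempty S i` says that the collection `𝒯ᵢ` of subsets `Tᵢ ⊆ S` of the
required form is non-empty: either `{xᵢ} ⊆ S`, or `S` contains words
`xᵢ^{m_{i,1}}, …, xᵢ^{m_{i,hᵢ}}` (with `hᵢ ≥ 2`, all exponents `≥ 2` and of gcd `1`)
together with words `xᵢ xⱼ^{a_{i,j}}` and `xⱼ^{b_{j,i}} xᵢ` for all `j ≠ i`. -/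
def TiNonempty {q : ℕ} (S : Set (List (Fin q))) (i : Fin q) : Prop :=
  [i] ∈ S ∨
    ∃ (M : Finset ℕ) (a b : Fin q → ℕ),
      2 ≤ M.card ∧ (∀ n ∈ M, 2 ≤ n) ∧ M.gcd id = 1 ∧
      (∀ n ∈ M, List.replicate n i ∈ S) ∧
      ∀ j : Fin q, j ≠ i →
        1 ≤ a j ∧ 1 ≤ b j ∧
        i :: List.replicate (a j) j ∈ S ∧
        List.replicate (b j) j ++ [i] ∈ S

open List Filter

theorem Finset.two_le_card_of_gcd_eq_one {F : Finset ℕ} (hF : F.gcd id = 1)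
    (h2 : ∀ n ∈ F, 2 ≤ n) : 2 ≤ F.card := by
  by_contra! hcard
  interval_cases h : F.card
  · simp [Finset.card_eq_zero.1 h] at hF
  · obtain ⟨n, rfl⟩ := Finset.card_eq_one.1 h
    have hn1 : n = 1 := by simpa using hF
    have := h2 n (Finset.mem_singleton_self n)
    omega

section Sublist

variable {α : Type*} {u : List α} {a b : α} {n : ℕ}

theorem List.exists_eq_cons_replicate_of_sublist (hab : a ≠ b)
    (h : u <+ a :: replicate n b) (ha : a ∈ u) : ∃ k, u = a :: replicate k b := by
  cases h with
  | cons _ h => exact absurd (eq_of_mem_replicate (h.subset ha)) hab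
  | cons_cons _ h =>
    obtain ⟨k, -, rfl⟩ := sublist_replicate_iff.1 h
    exact ⟨k, rfl⟩

theorem List.exists_eq_replicate_append_of_sublist (hab : a ≠ b)
    (h : u <+ replicate n b ++ [a]) (ha : a ∈ u) : ∃ k, u = replicate k b ++ [a] := by
  have h' : u.reverse <+ a :: replicate n b := by simpa using h.reverse
  obtain ⟨k, hk⟩ := exists_eq_cons_replicate_of_sublist hab h' (mem_reverse.2 ha)
  exact ⟨k, by simpa using congrArg reverse hk⟩

end Sublist

namespace Shuffle

variable {α : Type*} {u v w : List α}

theorem sublist_left (h : Shuffle u v w) : u <+ w := by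
  induction h with
  | nil => exact Sublist.refl _
  | left _ ih => exact ih.cons_cons _
  | right _ ih => exact ih.cons _

theorem sublist_right (h : Shuffle u v w) : v <+ w := by
  induction h with
  | nil => exact Sublist.refl _
  | left _ ih => exact ih.cons _
  | right _ ih => exact ih.cons_cons _

theorem length_eq (h : Shuffle u v w) : w.length = u.length + v.length := by
  induction h with
  | nil => rfl
  | left _ ih => simp only [length_cons, ih]; omega
  | right _ ih => simp only [length_cons, ih]; omega

theorem mem_or_mem (h : Shuffle u v w) {a : α} (ha : a ∈ w) : a ∈ u ∨ a ∈ v := by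
  induction h with
  | nil => simp at ha
  | left _ ih =>
    rcases mem_cons.1 ha with rfl | ha
    · exact Or.inl mem_cons_self
    · exact (ih ha).imp_left (mem_cons_of_mem _)
  | right _ ih =>
    rcases mem_cons.1 ha with rfl | ha
    · exact Or.inr mem_cons_self
    · exact (ih ha).imp_right (mem_cons_of_mem _)

end Shuffle

namespace IterShuffle

variable {α : Type*} {S : Set (List α)} {y : List α}

theorem exists_mem_sublist (h : IterShuffle S y) {a : α} (ha : a ∈ y) :
    ∃ u ∈ S, u <+ y ∧ a ∈ u := by
  induction h with
  | nil => simp at ha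
  | step hu _ hsh ih =>
    rcases hsh.mem_or_mem ha with ha | ha
    · exact ⟨_, hu, hsh.sublist_left, ha⟩
    · obtain ⟨u', hu', hsub, hau'⟩ := ih ha
      exact ⟨u', hu', hsub.trans hsh.sublist_right, hau'⟩

theorem exists_gcd_dvd_length (h : IterShuffle S y) {a : α} (hy : ∀ b ∈ y, b = a) :
    ∃ F : Finset ℕ, (∀ k ∈ F, replicate k a ∈ S) ∧ F.gcd id ∣ y.length := by
  induction h with
  | nil => exact ⟨∅, by simp, by simp⟩
  | @step u w _ hu _ hsh ih =>
    obtain ⟨F, hFS, hF⟩ := ih fun b hb => hy b (hsh.sublist_right.subset hb)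
    have hu_rep : replicate u.length a = u :=
      (eq_replicate_iff.2 ⟨rfl, fun b hb => hy b (hsh.sublist_left.subset hb)⟩).symm
    refine ⟨insert u.length F, ?_, ?_⟩
    · simpa [hu_rep] using ⟨hu, hFS⟩
    · rw [Finset.gcd_insert, hsh.length_eq]
      exact dvd_add (gcd_dvd_left _ _) ((gcd_dvd_right _ _).trans hF)

variable (hcof : {w : List α | ¬IterShuffle S w}.Finite)
include hcof

theorem eventually_of_cofinite {f : ℕ → List α} (hf : f.Injective) :
    ∀ᶠ n in atTop, IterShuffle S (f n) := by
  rw [← Nat.cofinite_eq_atTop, eventually_cofinite]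
  simpa using hcof.preimage hf.injOn

theorem exists_gcd_eq_one_of_cofinite (a : α) :
    ∃ F : Finset ℕ, (∀ k ∈ F, replicate k a ∈ S) ∧ F.gcd id = 1 := by
  have hev := eventually_of_cofinite hcof (replicate_left_injective a)
  obtain ⟨n, hn, hn'⟩ := (hev.and ((tendsto_add_atTop_nat 1).eventually hev)).exists
  obtain ⟨F₁, hF₁S, hF₁⟩ := hn.exists_gcd_dvd_length fun _ => eq_of_mem_replicate
  obtain ⟨F₂, hF₂S, hF₂⟩ := hn'.exists_gcd_dvd_length fun _ => eq_of_mem_replicate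
  refine ⟨F₁ ∪ F₂, fun k hk => (Finset.mem_union.1 hk).elim (hF₁S k) (hF₂S k), ?_⟩
  rw [length_replicate] at hF₁ hF₂
  have h₁ : (F₁ ∪ F₂).gcd id ∣ n := (Finset.gcd_mono Finset.subset_union_left).trans hF₁
  have h₂ : (F₁ ∪ F₂).gcd id ∣ n + 1 := (Finset.gcd_mono Finset.subset_union_right).trans hF₂
  exact Nat.dvd_one.1 ((Nat.dvd_add_right h₁).1 h₂)

theorem exists_cons_replicate_mem_of_cofinite {a b : α} (hab : a ≠ b) :
    ∃ k, a :: replicate k b ∈ S := by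
  have hinj : (fun n => a :: replicate n b).Injective := fun m n h => by
    simpa using congrArg length h
  obtain ⟨n, hn⟩ := (eventually_of_cofinite hcof hinj).exists
  obtain ⟨u, huS, hsub, hau⟩ := hn.exists_mem_sublist mem_cons_self
  obtain ⟨k, rfl⟩ := exists_eq_cons_replicate_of_sublist hab hsub hau
  exact ⟨k, huS⟩

theorem exists_replicate_append_mem_of_cofinite {a b : α} (hab : a ≠ b) :
    ∃ k, replicate k b ++ [a] ∈ S := by
  have hinj : (fun n => replicate n b ++ [a]).Injective := fun m n h => by
    simpa using congrArg length h
  obtain ⟨n, hn⟩ := (eventually_of_cofinite hcof hinj).exists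
  obtain ⟨u, huS, hsub, hau⟩ := hn.exists_mem_sublist (mem_append_right _ (mem_singleton_self a))
  obtain ⟨k, rfl⟩ := exists_eq_replicate_append_of_sublist hab hsub hau
  exact ⟨k, huS⟩

end IterShuffle

theorem Ti_nonempty_of_cofinite_general (q : ℕ)
    (S : Set (List (Fin q)))
    (hcof : {w : List (Fin q) | ¬ IterShuffle S w}.Finite) :
    ∀ i : Fin q, TiNonempty S i := by
  intro i
  by_cases hi : [i] ∈ S
  · exact Or.inl hi
  obtain ⟨F, hFS, hF⟩ := IterShuffle.exists_gcd_eq_one_of_cofinite hcof i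
  set M := F.filter (· ≠ 0)
  have hM : M.gcd id = 1 := by rwa [Finset.gcd_eq_gcd_filter_ne_zero] at hF
  have hM2 : ∀ n ∈ M, 2 ≤ n := fun n hn => by
    obtain ⟨hnF, hn0⟩ := Finset.mem_filter.1 hn
    have hn1 : n ≠ 1 := by rintro rfl; exact hi (hFS 1 hnF)
    omega
  have hword : ∀ j, ∃ k l : ℕ, j ≠ i →
      1 ≤ k ∧ 1 ≤ l ∧ i :: replicate k j ∈ S ∧ replicate l j ++ [i] ∈ S := fun j => by
    by_cases hj : j = i
    · exact ⟨0, 0, fun h => absurd hj h⟩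
    obtain ⟨k, hk⟩ := IterShuffle.exists_cons_replicate_mem_of_cofinite hcof (Ne.symm hj)
    obtain ⟨l, hl⟩ := IterShuffle.exists_replicate_append_mem_of_cofinite hcof (Ne.symm hj)
    have hk1 : 1 ≤ k := Nat.one_le_iff_ne_zero.2 (by rintro rfl; exact hi hk)
    have hl1 : 1 ≤ l := Nat.one_le_iff_ne_zero.2 (by rintro rfl; exact hi hl)
    exact ⟨k, l, fun _ => ⟨hk1, hl1, hk, hl⟩⟩
  choose a b hab using hword
  exact Or.inr ⟨M, a, b, Finset.two_le_card_of_gcd_eq_one hM hM2, hM2, hM,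
    fun n hn => hFS n (Finset.mem_filter.1 hn).1, hab⟩

/-- **Lemma (necessity).** For `q ≥ 1` and a finite set `S` of words over the
alphabet `{x₁, …, x_q}`, if the iterated shuffle `S^†` is co-finite then for
each `i` the collection `𝒯ᵢ` is non-empty. -/
theorem Ti_nonempty_of_cofinite (q : ℕ) (hq : 1 ≤ q)
    (S : Set (List (Fin q))) (hS : S.Finite)
    (hcof : {w : List (Fin q) | ¬ IterShuffle S w}.Finite) :
    ∀ i : Fin q, TiNonempty S i :=
  Ti_nonempty_of_cofinite_general q S hcof
end

section
/- Let q ≥ 1 and let S be a finite set of words over the alphabet Σ = {x_1, …, x_q}. Assume that for each i ∈ {1, …, q} the collection 𝒯_i is non-empty. For each i: if {x_i} ∈ 𝒯_i (i.e., x_i ∈ S), set g_i = −1 and m_{i,1} = a_{i,j} = b_{j,i} = 0 for all j; otherwise choose any T_i ∈ 𝒯_i of the second form, with parameters m_{i,1} < m_{i,2} < ⋯ < m_{i,h_i}, a_{i,j}, b_{j,i}, and set g_i = g(m_{i,1}, m_{i,2}, …, m_{i,h_i}). Then S^† contains every word over Σ of length at least Σ_{i=1}^q g_i + q + (q−1)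 · (max_i m_{i,1}) · (max_{i, j, j ≠ i} (a_{i,j}, b_{j,i})). -/
/-!
If every letter `i` occurs in `y` a number of times lying in the additive monoid of exponents
`{n | iⁿ ∈ S^†}`, then `y` is the shuffle of these powers. Otherwise some letter `i` occurs
`k ≤ gᵢ` times, so the other letters are plentiful. Write `k = m r + t` with `m = m_{i,1}` and
`t < m`. The `t` surplus occurrences of `i` are removed one by one: by pigeonhole some other letter
`j` occurs at least `A` times on one side of an occurrence of `i`, so a connecting word `i jᵃ` or
`jᵇ i` can be shuffled out. What is left is `i^{mr}` shuffled with a word over the remaining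
letters that is still long enough for induction on the alphabet.
-/

open List

namespace Shuffle

variable {α : Type*}

theorem nil_left : ∀ w : List α, Shuffle [] w w
  | [] => .nil
  | _ :: w => .right (nil_left w)

theorem nil_right : ∀ u : List α, Shuffle u [] u
  | [] => .nil
  | _ :: u => .left (nil_right u)

theorem eq_of_nil_left {w y : List α} (h : Shuffle [] w y) : y = w := by
  generalize hu : ([] : List α) = u at h
  induction h with
  | nil => rfl
  | left => cases hu
  | right _ ih => rw [ih hu]

theorem perm {u v w : List α} (h : Shuffle u v w) : (u ++ v).Perm w := by
  induction h with
  | nil => rfl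
  | left _ ih => exact ih.cons _
  | right _ ih => exact perm_middle.trans (ih.cons _)

theorem append {u₁ v₁ w₁ u₂ v₂ w₂ : List α} (h₁ : Shuffle u₁ v₁ w₁) (h₂ : Shuffle u₂ v₂ w₂) :
    Shuffle (u₁ ++ u₂) (v₁ ++ v₂) (w₁ ++ w₂) := by
  induction h₁ with
  | nil => exact h₂
  | left _ ih => exact .left ih
  | right _ ih => exact .right ih

theorem assoc {u c y : List α} (h : Shuffle u c y) :
    ∀ {d e : List α}, Shuffle d e u → ∃ z, Shuffle e c z ∧ Shuffle d z y := by
  induction h with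
  | nil => rintro d e ⟨⟩; exact ⟨[], .nil, .nil⟩
  | @left x _ _ _ _ ih =>
    intro d e hde
    cases hde with
    | left hde =>
      obtain ⟨z, hz, hzy⟩ := ih hde
      exact ⟨z, hz, .left hzy⟩
    | right hde =>
      obtain ⟨z, hz, hzy⟩ := ih hde
      exact ⟨x :: z, .left hz, .right hzy⟩
  | @right x _ _ _ _ ih =>
    intro d e hde
    obtain ⟨z, hz, hzy⟩ := ih hde
    exact ⟨x :: z, .right hz, .right hzy⟩

theorem filter (p : α → Bool) : ∀ y : List α, Shuffle (y.filter p) (y.filter (!p ·)) y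
  | [] => .nil
  | x :: y => by
    cases hx : p x
    · simpa [List.filter_cons, hx] using (filter p y).right
    · simpa [List.filter_cons, hx] using (filter p y).left

theorem replicate_add (i : α) (k l : ℕ) :
    Shuffle (replicate k i) (replicate l i) (replicate (k + l) i) := by
  induction k with
  | zero => simpa using nil_left _
  | succ k ih => simpa [replicate_succ, Nat.succ_add] using ih.left

variable [DecidableEq α]

theorem replicate_count_filter (i : α) (y : List α) :
    Shuffle (replicate (y.count i) i) (y.filter fun x => !(x == i)) y := by
  simpa [filter_beq] using filter (· == i) y

theorem exists_replicate_of_le_count {j : α} {k : ℕ} {y : List α} (hk : k ≤ y.count j) :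
    ∃ w, Shuffle (replicate k j) w y := by
  have hsplit := replicate_add j k (y.count j - k)
  rw [Nat.add_sub_cancel' hk] at hsplit
  obtain ⟨w, -, hw⟩ := (replicate_count_filter j y).assoc hsplit
  exact ⟨w, hw⟩

end Shuffle

namespace IterShuffle

variable {α : Type*} {S : Set (List α)}

theorem of_mem {u : List α} (hu : u ∈ S) : IterShuffle S u :=
  .step hu .nil (Shuffle.nil_right u)

theorem shuffle {u w y : List α} (hu : IterShuffle S u) (hw : IterShuffle S w)
    (h : Shuffle u w y) : IterShuffle S y := by
  induction hu generalizing w y with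
  | nil => rwa [h.eq_of_nil_left]
  | step hvS _ hde ih =>
    obtain ⟨z, hz, hzy⟩ := h.assoc hde
    exact .step hvS (ih hw hz) hzy

end IterShuffle

section

variable {α : Type*} {S : Set (List α)}

def exponentSubmonoid (S : Set (List α)) (i : α) : AddSubmonoid ℕ where
  carrier := {n | IterShuffle S (replicate n i)}
  add_mem' ha hb := ha.shuffle hb (Shuffle.replicate_add i _ _)
  zero_mem' := .nil

theorem mem_exponentSubmonoid_of_replicate_mem {i : α} {n : ℕ} (h : replicate n i ∈ S) :
    n ∈ exponentSubmonoid S i :=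
  .of_mem h

theorem sum_mul_mem_exponentSubmonoid {i : α} {M : Finset ℕ}
    (hM : ∀ n ∈ M, replicate n i ∈ S) (c : ℕ → ℕ) :
    ∑ n ∈ M, c n * n ∈ exponentSubmonoid S i :=
  sum_mem fun n hn => nsmul_mem (mem_exponentSubmonoid_of_replicate_mem (hM n hn)) (c n)

variable [DecidableEq α]

theorem iterShuffle_of_forall_count_mem (s : Finset α) {y : List α} (hy : ∀ x ∈ y, x ∈ s)
    (hcount : ∀ x ∈ s, y.count x ∈ exponentSubmonoid S x) : IterShuffle S y := by
  induction s using Finset.induction_on generalizing y with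
  | empty =>
    obtain rfl : y = [] := eq_nil_iff_forall_not_mem.2 fun x hx => by simpa using hy x hx
    exact .nil
  | insert i s hi ih =>
    refine (hcount i (Finset.mem_insert_self i s)).shuffle (ih ?_ ?_)
      (Shuffle.replicate_count_filter i y)
    · intro x hx
      obtain ⟨hxy, hxi⟩ := by simpa using hx
      simpa [hxi] using hy x hxy
    · intro x hx
      rw [count_filter (by simpa using ne_of_mem_of_not_mem hx hi)]
      exact hcount x (Finset.mem_insert_of_mem hx)

theorem iterShuffle_of_count_mem_of_erase {s : Finset α} {i : α} {z : List α}
    (hz : ∀ x ∈ z, x ∈ s) (hpow : z.count i ∈ exponentSubmonoid S i)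
    (hrest : ∀ w : List α, (∀ x ∈ w, x ∈ s.erase i) → w.length = z.length - z.count i →
      IterShuffle S w) : IterShuffle S z := by
  have hsplit := Shuffle.replicate_count_filter i z
  refine hpow.shuffle (hrest _ (fun x hx => ?_) ?_) hsplit
  · obtain ⟨hxz, hxi⟩ := by simpa using hx
    exact Finset.mem_erase.2 ⟨hxi, hz x hxz⟩
  · have := hsplit.perm.length_eq
    rw [length_append, length_replicate] at this
    omega

end

section

variable {α : Type*} [DecidableEq α] {S : Set (List α)}

def HasConnectingWords (S : Set (List α)) (A : ℕ) (i j : α) : Prop :=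
  (∃ a ≤ A, i :: replicate a j ∈ S) ∧ ∃ b ≤ A, replicate b j ++ [i] ∈ S

theorem sum_count_erase_eq {s : Finset α} {y : List α} (hy : ∀ x ∈ y, x ∈ s) (i : α) :
    ∑ j ∈ s.erase i, y.count j = y.length - y.count i := by
  have htotal : ∑ j ∈ s, y.count j = y.length := by
    simpa using Multiset.sum_count_eq_card (s := s) (m := (y : Multiset α)) (by simpa using hy)
  by_cases hi : i ∈ s
  · rw [← Finset.add_sum_erase s _ hi] at htotal
    omega
  · rw [Finset.erase_eq_of_notMem hi, htotal, count_eq_zero.2 fun h => hi (hy i h)]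
    rfl

theorem exists_connectingWord_shuffle {A : ℕ} {s : Finset α} {i : α} {y : List α}
    (hy : ∀ x ∈ y, x ∈ s) (hi : i ∈ y) (hconn : ∀ j ∈ s, j ≠ i → HasConnectingWords S A i j)
    (hlong : (s.erase i).card * (2 * A) < y.length - y.count i) :
    ∃ u ∈ S, ∃ w, Shuffle u w y ∧ u.count i = 1 ∧ u.length ≤ A + 1 := by
  obtain ⟨y₁, y₂, rfl⟩ := append_of_mem hi
  obtain ⟨j, hj, hmany⟩ : ∃ j ∈ s.erase i, 2 * A < y₁.count j + y₂.count j := by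
    refine Finset.exists_lt_of_sum_lt ?_
    rw [← sum_count_erase_eq hy i] at hlong
    rw [Finset.sum_const, smul_eq_mul]
    refine hlong.trans_le (Finset.sum_le_sum fun j hj => ?_)
    simp [(Finset.ne_of_mem_erase hj).symm]
  obtain ⟨hji, hjs⟩ := Finset.mem_erase.1 hj
  obtain ⟨⟨a, ha, haS⟩, b, hb, hbS⟩ := hconn j hjs hji
  by_cases h₂ : A ≤ y₂.count j
  · obtain ⟨w, hw⟩ := Shuffle.exists_replicate_of_le_count (ha.trans h₂)
    refine ⟨_, haS, y₁ ++ w, by simpa using (Shuffle.nil_left y₁).append hw.left, ?_, by simpa⟩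
    simp [count_replicate, hji]
  · obtain ⟨w, hw⟩ := Shuffle.exists_replicate_of_le_count (j := j) (y := y₁) (hb.trans (by omega))
    refine ⟨_, hbS, w ++ y₂, hw.append (Shuffle.nil_left y₂).left, ?_, by simpa⟩
    simp [count_replicate, hji]

theorem iterShuffle_of_connectingWords {A B n : ℕ} {s : Finset α} {i : α}
    (hconn : ∀ j ∈ s, j ≠ i → HasConnectingWords S A i j)
    (hB : (s.erase i).card * (2 * A) < B + A)
    (hbase : ∀ y : List α, (∀ x ∈ y, x ∈ s) → y.count i = n → B ≤ y.length - n →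
      IterShuffle S y)
    (t : ℕ) {y : List α} (hy : ∀ x ∈ y, x ∈ s) (hcount : y.count i = n + t)
    (hlen : B + t * A ≤ y.length - y.count i) : IterShuffle S y := by
  induction t generalizing y with
  | zero => exact hbase y hy hcount (by simpa [hcount] using hlen)
  | succ t ih =>
    rw [add_one_mul] at hlen
    obtain ⟨u, huS, w, hsh, hui, hulen⟩ :=
      exists_connectingWord_shuffle hy (count_pos_iff.1 (by omega)) hconn (by omega)
    have hcount_w : w.count i + 1 = y.count i := by
      rw [← hsh.perm.count_eq, count_append]
      omega
    have hlen_w : y.length = u.length + w.length := by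
      rw [← hsh.perm.length_eq, length_append]
    exact .step huS (ih (fun x hx => hy x (hsh.perm.subset (mem_append_right _ hx)))
      (by omega) (by omega)) hsh

end

/-- `c i` plays the role of `gᵢ + 1`, the conductor of `exponentSubmonoid S i`. -/
theorem iterShuffle_of_length_ge {α : Type*} [DecidableEq α] {S : Set (List α)} (c : α → ℕ)
    (G A : ℕ) (hc : ∀ i N, c i ≤ N → N ∈ exponentSubmonoid S i)
    (hconn : ∀ i, c i ≠ 0 → ∃ m, 2 ≤ m ∧ m ≤ G ∧ m ∈ exponentSubmonoid S i ∧
      ∀ j ≠ i, HasConnectingWords S A i j)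
    (s : Finset α) {y : List α} (hy : ∀ x ∈ y, x ∈ s)
    (hlen : ∑ i ∈ s, c i + (s.card - 1) * G * A ≤ y.length) : IterShuffle S y := by
  induction s using Finset.strongInduction generalizing y with | H s ih => ?_
  by_cases hall : ∀ i ∈ s, y.count i ∈ exponentSubmonoid S i
  · exact iterShuffle_of_forall_count_mem s hy hall
  push Not at hall
  obtain ⟨i, his, hk⟩ := hall
  have hk_lt : y.count i < c i := lt_of_not_ge fun h => hk (hc i _ h)
  obtain ⟨m, hm2, hmG, hmS, hconn_i⟩ := hconn i (by omega)
  set E := s.erase i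
  have hcard : E.card + 1 = s.card := Finset.card_erase_add_one his
  have hsum : c i + ∑ j ∈ E, c j = ∑ j ∈ s, c j := Finset.add_sum_erase s c his
  have hother : 0 < ∑ j ∈ E, y.count j := by rw [sum_count_erase_eq hy]; omega
  obtain ⟨e, he⟩ := Nat.exists_eq_add_one.2
    (Finset.card_pos.2 (Finset.nonempty_of_sum_ne_zero hother.ne'))
  set t := y.count i % m
  have hdiv : m * (y.count i / m) + t = y.count i := Nat.div_add_mod _ _
  have ht : t + 1 ≤ G := by have := Nat.mod_lt (y.count i) (by omega : 0 < m); omega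
  have h₁ : t * A + A ≤ G * A := by rw [← add_one_mul]; exact Nat.mul_le_mul_right A ht
  have h₂ : e * (2 * A) ≤ e * G * A := by
    rw [mul_assoc]
    exact Nat.mul_le_mul_left e (Nat.mul_le_mul_right A (hm2.trans hmG))
  have hexp₁ : (e + 1) * (2 * A) = e * (2 * A) + 2 * A := by ring
  have hexp₂ : (s.card - 1) * G * A = e * G * A + G * A := by
    rw [← hcard, he, Nat.add_sub_cancel]
    ring
  -- Remove the `t` surplus copies of `i` by connecting words, each costing at most `A` other
  -- letters; `B` is what must remain of the other letters afterwards.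
  refine iterShuffle_of_connectingWords (B := y.length - y.count i - t * A)
    (n := m * (y.count i / m)) (fun j _ => hconn_i j) ?_ ?_ t hy hdiv.symm (by omega)
  · rw [he, hexp₁]; omega
  · intro z hz hzn hzB
    refine iterShuffle_of_count_mem_of_erase (i := i) hz
      (by simpa [hzn, mul_comm] using nsmul_mem hmS (y.count i / m)) fun w hw hwlen => ?_
    exact ih E (Finset.erase_ssubset his) hw (by rw [he, Nat.add_sub_cancel]; omega)

theorem iterShuffle_of_long_general (q : ℕ) (hq : 1 ≤ q)
    (S : Set (List (Fin q)))
    (g : Fin q → ℤ) (m1 : Fin q → ℕ) (a b : Fin q → Fin q → ℕ)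
    (hchoice : ∀ i : Fin q,
      ([i] ∈ S ∧ g i = -1 ∧ m1 i = 0 ∧ ∀ j : Fin q, a i j = 0 ∧ b j i = 0) ∨
      (∃ M : Finset ℕ,
        2 ≤ M.card ∧ (∀ n ∈ M, 2 ≤ n) ∧ M.gcd id = 1 ∧
        (∀ n ∈ M, List.replicate n i ∈ S) ∧
        (m1 i ∈ M ∧ ∀ n ∈ M, m1 i ≤ n) ∧
        (∀ j : Fin q, j ≠ i →
          1 ≤ a i j ∧ 1 ≤ b j i ∧
          i :: List.replicate (a i j) j ∈ S ∧
          List.replicate (b j i) j ++ [i] ∈ S) ∧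
        (∃ gn : ℕ, g i = (gn : ℤ) ∧
          ¬ (∃ c : ℕ → ℕ, gn = ∑ n ∈ M, c n * n) ∧
          ∀ N : ℕ, gn < N → ∃ c : ℕ → ℕ, N = ∑ n ∈ M, c n * n))) :
    ∀ y : List (Fin q),
      (∑ i, g i) + (q : ℤ) +
          ((q : ℤ) - 1) * ((Finset.univ.sup m1 : ℕ) : ℤ) *
            (((Finset.univ.sup fun i : Fin q => Finset.univ.sup fun j : Fin q =>
              if i = j then 0 else max (a i j) (b j i) : ℕ) : ℤ))
        ≤ (y.length : ℤ) →
      IterShuffle S y := by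
  intro y hy
  set G := Finset.univ.sup m1
  set A := Finset.univ.sup fun i : Fin q => Finset.univ.sup fun j : Fin q =>
    if i = j then 0 else max (a i j) (b j i)
  have hA : ∀ i j, j ≠ i → a i j ≤ A ∧ b j i ≤ A := fun i j hji => by
    simpa [hji.symm] using Finset.sup_le_iff.1
      (Finset.sup_le_iff.1 (le_refl A) i (Finset.mem_univ i)) j (Finset.mem_univ j)
  have hc : ∀ i, ((g i + 1).toNat : ℤ) = g i + 1 := fun i => by
    rcases hchoice i with ⟨-, hgi, -⟩ | ⟨-, -, -, -, -, -, -, gn, hgi, -⟩ <;> omega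
  refine iterShuffle_of_length_ge (fun i => (g i + 1).toNat) G A ?_ ?_ Finset.univ
    (fun x _ => Finset.mem_univ x) ?_
  · intro i N hN
    rcases hchoice i with ⟨hiS, -⟩ | ⟨M, -, -, -, hMS, -, -, gn, hgi, -, hrep⟩
    · simpa using nsmul_mem (mem_exponentSubmonoid_of_replicate_mem (n := 1) hiS) N
    · obtain ⟨c, rfl⟩ := hrep N (by omega)
      exact sum_mul_mem_exponentSubmonoid hMS c
  · intro i hci
    rcases hchoice i with ⟨-, hgi, -⟩ | ⟨M, -, hM2, -, hMS, ⟨hm1M, -⟩, hconn, -⟩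
    · simp [hgi] at hci
    refine ⟨m1 i, hM2 _ hm1M, Finset.le_sup (Finset.mem_univ i),
      mem_exponentSubmonoid_of_replicate_mem (hMS _ hm1M), fun j hji => ?_⟩
    obtain ⟨-, -, hleft, hright⟩ := hconn j hji
    exact ⟨⟨a i j, (hA i j hji).1, hleft⟩, b j i, (hA i j hji).2, hright⟩
  · zify [Finset.card_univ, Fintype.card_fin, hq]
    simp only [hc, Finset.sum_add_distrib, Finset.sum_const, Finset.card_univ, Fintype.card_fin]
    simpa using hy

/-- **Theorem (upper bound).** Assume that for each `i` the collection `𝒯ᵢ` is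
non-empty, and for each `i` fix the data of a chosen `Tᵢ`: if `{xᵢ} ∈ 𝒯ᵢ`
(i.e. `xᵢ ∈ S`) put `g i = -1` and `m1 i = a i j = b j i = 0` for all `j`;
otherwise choose a `Tᵢ` of the second form, with set of exponents `M`
(whose least element is `m1 i`), connecting words given by `a i j`, `b j i`
for `j ≠ i`, and `g i` the Frobenius number of `M`.  Then `S^†` contains every
word of length at least
`∑ i, g i + q + (q-1) * (max_i m1 i) * (max_{i ≠ j} (a i j, b j i))`. -/
theorem iterShuffle_of_long (q : ℕ) (hq : 1 ≤ q)
    (S : Set (List (Fin q))) (hS : S.Finite)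
    (g : Fin q → ℤ) (m1 : Fin q → ℕ) (a b : Fin q → Fin q → ℕ)
    (hchoice : ∀ i : Fin q,
      ([i] ∈ S ∧ g i = -1 ∧ m1 i = 0 ∧ ∀ j : Fin q, a i j = 0 ∧ b j i = 0) ∨
      (∃ M : Finset ℕ,
        2 ≤ M.card ∧ (∀ n ∈ M, 2 ≤ n) ∧ M.gcd id = 1 ∧
        (∀ n ∈ M, List.replicate n i ∈ S) ∧
        (m1 i ∈ M ∧ ∀ n ∈ M, m1 i ≤ n) ∧
        (∀ j : Fin q, j ≠ i →
          1 ≤ a i j ∧ 1 ≤ b j i ∧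
          i :: List.replicate (a i j) j ∈ S ∧
          List.replicate (b j i) j ++ [i] ∈ S) ∧
        (∃ gn : ℕ, g i = (gn : ℤ) ∧
          ¬ (∃ c : ℕ → ℕ, gn = ∑ n ∈ M, c n * n) ∧
          ∀ N : ℕ, gn < N → ∃ c : ℕ → ℕ, N = ∑ n ∈ M, c n * n))) :
    ∀ y : List (Fin q),
      (∑ i, g i) + (q : ℤ) +
          ((q : ℤ) - 1) * ((Finset.univ.sup m1 : ℕ) : ℤ) *
            (((Finset.univ.sup fun i : Fin q => Finset.univ.sup fun j : Fin q =>
              if i = j then 0 else max (a i j) (b j i) : ℕ) : ℤ))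
        ≤ (y.length : ℤ) →
      IterShuffle S y :=
  iterShuffle_of_long_general q hq S g m1 a b hchoice
end

section
/- Let q ≥ 2, m ≥ 3, Σ = {x_1, …, x_q}, and let S = ⋃_{i=1}^q {x_i^m, x_i^{m+1}} ∪ ⋃_{i ≠ j} {x_i x_j^{m−1}, x_j^{m−1} x_i}. Then the word y = x_1^{m−2} x_2^{m−2} ⋯ x_{q−1}^{m−2} x_q^{qm² − 3qm + 3m + 2q − 4} x_1, which has length qm² − 2qm + 2m − 1, is not in S^†. -/
/-! Every word of `S` used to build `y` is a subword of `y`. Apart from `x_q`, each letter occurs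
at most `m - 1` times in `y`, and an `x₁^{m-1}` subword can be neither preceded nor followed by
another letter. So only the words `x_q^m`, `x_q^{m+1}`, `x_i x_q^{m-1}`, `x_q^{m-1} x_i` occur,
and the last two contribute exactly one letter other than `x_q` each. Counting letters, the
exponent of `x_q` in `y` would be `k (m - 1) + c m + d (m + 1)` with `k = (q - 1)(m - 2) + 1`,
i.e. `m² - m - 1 = c m + d (m + 1)`; but `m² - m - 1` is the Frobenius number of `m` and `m + 1`. -/

open List

variable {α : Type*}

theorem Shuffle.perm_append {u v w : List α} (h : Shuffle u v w) : w.Perm (u ++ v) := by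
  induction h with
  | nil => exact .nil
  | left _ ih => exact ih.cons _
  | right _ ih => exact (ih.cons _).trans List.perm_middle.symm

theorem Shuffle.sublist_left_s11 {u v w : List α} (h : Shuffle u v w) : u <+ w := by
  induction h with
  | nil => exact .slnil
  | left _ ih => exact ih.cons_cons _
  | right _ ih => exact ih.cons _

theorem Shuffle.sublist_right_s11 {u v w : List α} (h : Shuffle u v w) : v <+ w := by
  induction h with
  | nil => exact .slnil
  | left _ ih => exact ih.cons _
  | right _ ih => exact ih.cons_cons _

theorem IterShuffle.coe_mem_closure_of_sublist {S : Set (List α)} {y z : List α}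
    (hz : IterShuffle S z) (hzy : z <+ y) :
    (z : Multiset α) ∈ AddSubmonoid.closure ((↑) '' {u | u ∈ S ∧ u <+ y}) := by
  induction hz with
  | nil => exact zero_mem _
  | step hu _ hsh ih =>
    rw [Multiset.coe_eq_coe.mpr hsh.perm_append, ← Multiset.coe_add]
    exact add_mem (AddSubmonoid.subset_closure ⟨_, ⟨hu, hsh.sublist_left_s11.trans hzy⟩, rfl⟩)
      (ih (hsh.sublist_right_s11.trans hzy))

theorem List.Sublist.of_cons_sublist_replicate_append {a b : α} {l s : List α} {n : ℕ}
    (h : a :: l <+ replicate n b ++ s) (hab : a ≠ b) : a :: l <+ s := by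
  induction n with
  | zero => simpa using h
  | succ n ih => exact ih (h.of_cons_of_ne hab)

theorem List.Sublist.of_concat_sublist_concat {a b : α} {l s : List α}
    (h : l ++ [a] <+ s ++ [b]) (hab : a ≠ b) : l ++ [a] <+ s := by
  rw [← reverse_sublist] at h ⊢
  simp only [reverse_append, reverse_cons, reverse_nil, nil_append, singleton_append] at h ⊢
  exact h.of_cons_of_ne hab

theorem Nat.mul_add_mul_succ_add_succ_ne_mul_self (m c d : ℕ) :
    c * m + d * (m + 1) + m + 1 ≠ m * m := by
  intro h
  have hsplit : m * (c + d + 1) + (d + 1) = m * m := by linarith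
  have hdvd : m ∣ d + 1 := (Nat.dvd_add_right (dvd_mul_right m _)).mp (hsplit ▸ dvd_mul_right m m)
  have hle : m ≤ d + 1 := Nat.le_of_dvd d.succ_pos hdvd
  nlinarith

/-- Letter profiles of sums of `k` words `x_i x_q^{m-1}` or `x_q^{m-1} x_i`, `c` words `x_q^m` and
`d` words `x_q^{m+1}`, where `a` plays the role of `x_q`. -/
def blockProfile [DecidableEq α] (a : α) (m : ℕ) : AddSubmonoid (Multiset α) where
  carrier := {s | ∃ k c d : ℕ,
    s.count a = k * (m - 1) + c * m + d * (m + 1) ∧ s.card = s.count a + k}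
  zero_mem' := ⟨0, 0, 0, by simp⟩
  add_mem' := by
    rintro s t ⟨k, c, d, hs, hs'⟩ ⟨k', c', d', ht, ht'⟩
    refine ⟨k + k', c + c', d + d', ?_, ?_⟩
    · rw [Multiset.count_add, hs, ht]; ring
    · rw [Multiset.card_add, Multiset.count_add, hs', ht']; ring

def protoWords (m : ℕ) : Set (List α) :=
  {w | ∃ i : α, w = List.replicate m i ∨ w = List.replicate (m + 1) i} ∪
    {w | ∃ i j : α, i ≠ j ∧
      (w = i :: List.replicate (m - 1) j ∨ w = List.replicate (m - 1) j ++ [i])}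

namespace ExtremalWord

variable [DecidableEq α]

theorem count_le_of_ne_of_ne {a b c : α} {m N : ℕ} {B : List α}
    (hB : ∀ c, B.count c ≤ m - 2) (hca : c ≠ a) (hcb : c ≠ b) :
    (B ++ replicate N a ++ [b]).count c ≤ m - 2 := by
  simpa [count_replicate, hca.symm, hcb.symm] using hB c

theorem count_le_of_ne {a b c : α} {m N : ℕ} {B : List α}
    (hB : ∀ c, B.count c ≤ m - 2) (hca : c ≠ a) :
    (B ++ replicate N a ++ [b]).count c ≤ m - 2 + 1 := by
  have hsingle : [b].count c ≤ 1 := count_le_length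
  have hrep : (replicate N a).count c = 0 := count_eq_zero.mpr fun h => hca (eq_of_mem_replicate h)
  rw [count_append, count_append, hrep]
  have := hB c
  omega

theorem not_replicate_sublist {a b i : α} {m N : ℕ} {B : List α} (hm : 2 ≤ m)
    (hB : ∀ c, B.count c ≤ m - 2) (hia : i ≠ a) :
    ¬ replicate m i <+ B ++ replicate N a ++ [b] := by
  rw [replicate_sublist_iff]
  have := count_le_of_ne (b := b) (N := N) hB hia
  omega

/-- Before the final `b`, the letter `b` occurs only in the prefix `b^{m-2}` of `B`. -/
theorem not_cons_replicate_sublist {a b i j : α} {m N : ℕ} {B : List α} (hm : 3 ≤ m)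
    (hB : ∀ c, B.count c ≤ m - 2) (hbB : replicate (m - 2) b <+: B)
    (hja : j ≠ a) (hij : i ≠ j) :
    ¬ i :: replicate (m - 1) j <+ B ++ replicate N a ++ [b] := by
  intro h
  by_cases hjb : j = b
  · subst hjb
    obtain ⟨R, rfl⟩ := hbB
    have hR : R.count j = 0 := by simpa using hB j
    have hsub := (by simpa using h : i :: replicate (m - 1) j <+
      replicate (m - 2) j ++ (R ++ replicate N a ++ [j])).of_cons_sublist_replicate_append hij
    have hle := replicate_sublist_iff.mp (sublist_of_cons_sublist hsub)
    have hone : (R ++ replicate N a ++ [j]).count j = 1 := by simp [hR, count_replicate, hja.symm]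
    omega
  · have := count_le_of_ne_of_ne (N := N) hB hja hjb
    have := replicate_sublist_iff.mp (sublist_of_cons_sublist h)
    omega

theorem not_replicate_append_sublist {a b i j : α} {m N : ℕ} {B : List α} (hm : 2 ≤ m)
    (hB : ∀ c, B.count c ≤ m - 2) (hja : j ≠ a) (hij : i ≠ j) :
    ¬ replicate (m - 1) j ++ [i] <+ B ++ replicate N a ++ [b] := by
  intro h
  by_cases hjb : j = b
  · subst hjb
    have hle := replicate_sublist_iff.mp
      ((sublist_append_left _ _).trans (h.of_concat_sublist_concat hij))
    have hcount : (B ++ replicate N a).count j = B.count j := by simp [count_replicate, hja.symm]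
    have := hB j
    omega
  · have := count_le_of_ne_of_ne (N := N) hB hja hjb
    have := replicate_sublist_iff.mp ((sublist_append_left _ _).trans h)
    omega

theorem coe_mem_blockProfile {a b : α} {m N : ℕ} {B : List α} (hm : 3 ≤ m)
    (hB : ∀ c, B.count c ≤ m - 2) (hbB : replicate (m - 2) b <+: B) {u : List α}
    (hu : u ∈ protoWords m) (huy : u <+ B ++ replicate N a ++ [b]) :
    (u : Multiset α) ∈ blockProfile a m := by
  rcases hu with ⟨i, rfl | rfl⟩ | ⟨i, j, hij, rfl | rfl⟩
  · obtain rfl : i = a := by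
      by_contra hia; exact not_replicate_sublist (by omega) hB hia huy
    exact ⟨0, 1, 0, by simp⟩
  · obtain rfl : i = a := by
      by_contra hia
      exact not_replicate_sublist (by omega) hB hia ((replicate_sublist_replicate i).mpr
        (Nat.le_succ m) |>.trans huy)
    exact ⟨0, 0, 1, by simp⟩
  · obtain rfl : j = a := by
      by_contra hja; exact not_cons_replicate_sublist hm hB hbB hja hij huy
    exact ⟨1, 0, 0, by simp [hij]⟩
  · obtain rfl : j = a := by
      by_contra hja; exact not_replicate_append_sublist (by omega) hB hja hij huy
    exact ⟨1, 0, 0, by simp [hij]⟩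

theorem not_iterShuffle {a b : α} {m N : ℕ} {B : List α} (hm : 3 ≤ m)
    (hB : ∀ c, B.count c ≤ m - 2) (hbB : replicate (m - 2) b <+: B) (haB : a ∉ B) (hab : a ≠ b)
    (hN : ∀ c d, N ≠ (B.length + 1) * (m - 1) + c * m + d * (m + 1)) :
    ¬ IterShuffle (protoWords m) (B ++ replicate N a ++ [b]) := by
  intro hy
  obtain ⟨k, c, d, hcount, hcard⟩ := (AddSubmonoid.closure_le (S := blockProfile a m)).mpr
    (by rintro _ ⟨u, ⟨hu, huy⟩, rfl⟩; exact coe_mem_blockProfile hm hB hbB hu huy)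
    (hy.coe_mem_closure_of_sublist (Sublist.refl _))
  simp only [Multiset.coe_count, Multiset.coe_card, count_append, count_eq_zero.mpr haB,
    count_replicate_self, count_singleton, beq_iff_eq, hab.symm, if_false, length_append,
    length_replicate, length_singleton] at hcount hcard
  obtain rfl : k = B.length + 1 := by omega
  exact hN c d (by omega)

end ExtremalWord

theorem count_flatMap_replicate {β : Type*} [DecidableEq α] (l : List β) (f : β → α) (r : ℕ)
    (x : α) : (l.flatMap fun k => replicate r (f k)).count x = r * (l.map f).count x := by
  induction l with
  | nil => simp
  | cons k l ih =>
    simp only [flatMap_cons, map_cons, count_append, count_cons, ih, count_replicate]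
    split <;> simp_all [mul_add, add_comm]

section Staircase

variable {q : ℕ}

theorem count_flatMap_range_replicate_le (hq : 0 < q) {n : ℕ} (hn : n ≤ q) (r : ℕ) (x : Fin q) :
    ((range n).flatMap fun k => replicate r (⟨k % q, Nat.mod_lt k hq⟩ : Fin q)).count x ≤ r := by
  have hnodup : ((range n).map fun k => (⟨k % q, Nat.mod_lt k hq⟩ : Fin q)).Nodup := by
    refine nodup_range.map_on fun k hk l hl hkl => ?_
    simp only [mem_range, Fin.mk.injEq] at hk hl hkl
    rwa [Nat.mod_eq_of_lt (by omega), Nat.mod_eq_of_lt (by omega)] at hkl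
  rw [count_flatMap_replicate]
  exact mul_le_of_le_one_right' (nodup_iff_count_le_one.mp hnodup x)

theorem notMem_flatMap_range_replicate (hq : 0 < q) {n : ℕ} (hn : n < q) (r : ℕ) :
    (⟨n, hn⟩ : Fin q) ∉
      (range n).flatMap fun k => replicate r (⟨k % q, Nat.mod_lt k hq⟩ : Fin q) := by
  simp only [mem_flatMap, mem_range, mem_replicate, Fin.mk.injEq, not_exists, not_and]
  intro k hk _ hnk
  rw [Nat.mod_eq_of_lt (by omega)] at hnk
  omega

theorem replicate_prefix_flatMap_range_replicate (hq : 0 < q) (n r : ℕ) :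
    replicate r (⟨0, hq⟩ : Fin q) <+:
      (range (n + 1)).flatMap fun k => replicate r (⟨k % q, Nat.mod_lt k hq⟩ : Fin q) := by
  rw [range_succ_eq_map, flatMap_cons]
  exact prefix_append _ _

end Staircase

namespace ExtremalWord

theorem cast_exponent {q m : ℕ} (hq : 2 ≤ q) (hm : 3 ≤ m) :
    ((q * m ^ 2 - 3 * q * m + 3 * m + 2 * q - 4 : ℕ) : ℤ) =
      q * m ^ 2 - 3 * q * m + 3 * m + 2 * q - 4 := by
  have h₁ : 3 * q * m ≤ q * m ^ 2 := by nlinarith [Nat.mul_le_mul_left (q * m) hm]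
  have h₂ : 4 ≤ q * m ^ 2 - 3 * q * m + 3 * m + 2 * q := by omega
  push_cast [Nat.cast_sub h₁, Nat.cast_sub h₂]
  ring

theorem exponent_ne {q m : ℕ} (hq : 2 ≤ q) (hm : 3 ≤ m) (c d : ℕ) :
    q * m ^ 2 - 3 * q * m + 3 * m + 2 * q - 4 ≠
      ((q - 1) * (m - 2) + 1) * (m - 1) + c * m + d * (m + 1) := by
  intro h
  apply Nat.mul_add_mul_succ_add_succ_ne_mul_self m c d
  zify [(by omega : 1 ≤ q), (by omega : 2 ≤ m), (by omega : 1 ≤ m)] at h ⊢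
  rw [cast_exponent hq hm] at h
  linear_combination -h

end ExtremalWord

/-- For `q ≥ 2`, `m ≥ 3` and the prototypical set `S`, the word
`y = x₁^{m-2} x₂^{m-2} ⋯ x_{q-1}^{m-2} x_q^{qm² - 3qm + 3m + 2q - 4} x₁`, which
has length `qm² - 2qm + 2m - 1`, is not in `S^†`. -/
theorem proto_extremal_word (q m : ℕ) (hq : 2 ≤ q) (hm : 3 ≤ m)
    (S : Set (List (Fin q)))
    (hS : S = {w | ∃ i : Fin q, w = List.replicate m i ∨ w = List.replicate (m + 1) i} ∪
              {w | ∃ i j : Fin q, i ≠ j ∧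
                (w = i :: List.replicate (m - 1) j ∨
                 w = List.replicate (m - 1) j ++ [i])})
    (y : List (Fin q))
    (hy : y = ((List.range (q - 1)).flatMap
            (fun k => List.replicate (m - 2) (⟨k % q, Nat.mod_lt k (by omega)⟩ : Fin q)))
          ++ List.replicate (q * m ^ 2 - 3 * q * m + 3 * m + 2 * q - 4)
              (⟨q - 1, by omega⟩ : Fin q)
          ++ [(⟨0, by omega⟩ : Fin q)]) :
    (y.length : ℤ) = (q : ℤ) * m ^ 2 - 2 * q * m + 2 * m - 1 ∧ ¬ IterShuffle S y := by
  subst hS hy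
  have hq0 : 0 < q := by omega
  have hB := count_flatMap_range_replicate_le hq0 (Nat.sub_le q 1) (m - 2)
  have hbB := replicate_prefix_flatMap_range_replicate hq0 (q - 2) (m - 2)
  rw [show q - 2 + 1 = q - 1 by omega] at hbB
  have haB := notMem_flatMap_range_replicate hq0 (Nat.sub_lt hq0 one_pos) (m - 2)
  have hab : (⟨q - 1, by omega⟩ : Fin q) ≠ ⟨0, hq0⟩ := by simp only [ne_eq, Fin.mk.injEq]; omega
  refine ⟨?_, ExtremalWord.not_iterShuffle hm hB hbB haB hab fun c d => ?_⟩
  · simp only [length_append, length_flatMap, length_replicate, length_singleton, map_const',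
      sum_replicate, length_range, smul_eq_mul]
    push_cast [Nat.cast_sub (by omega : 1 ≤ q), Nat.cast_sub (by omega : 2 ≤ m),
      ExtremalWord.cast_exponent hq hm]
    ring
  · simpa using ExtremalWord.exponent_ne hq hm c d
end
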